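/- Let u : [0,∞) × ℝ² → ℂ be bounded in L_t^∞ L_x² with mass M(u(t)) ≤ M₀, and suppose there is a function λ : [0,∞) → [1,∞) with λ(t) ≤ C t^{1/2} for t > T₀, such that for every ε > 0 there is C_ε with ∫_{|x|>C_ε λ(t)} |u(t,x)|² dx < ε for all t. Then for every Schwartz function φ, ⟨u(t), e^{itΔ}φ⟩ → 0 as t → ∞. -/

import Mathlib

/-
Split the pairing at radius `Cε λ(t)`. Outside the ball the tightness makes `u(t)` small in `L²`
while `e^{itΔ}φ` keeps the `L²` norm of `φ`. Inside the ball `u(t)` has bounded mass while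
`e^{itΔ}φ = O(t⁻¹)` pointwise by the dispersive estimate, on a ball of area `O(λ(t)²) = O(t)`,
so this part is `O(t^{-1/2})`. Both halves are estimated by the weighted AM–GM inequality
`ab ≤ ηa² + η⁻¹b²`, with the tightness applied at `ε = η²`.
-/

open MeasureTheory Filter ComplexConjugate
open scoped ENNReal

theorem ENNReal.mul_le_mul_sq_add_inv_mul_sq (a b : ℝ≥0∞) {c : ℝ≥0∞} (hc₀ : c ≠ 0)
    (hc : c ≠ ∞) : a * b ≤ c * a ^ 2 + c⁻¹ * b ^ 2 := by
  rcases le_total b (c * a) with h | h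
  · calc a * b ≤ a * (c * a) := by gcongr
      _ = c * a ^ 2 := by ring
      _ ≤ _ := le_self_add
  · have ha : a ≤ c⁻¹ * b := by
      calc a = c⁻¹ * (c * a) := by rw [← mul_assoc, ENNReal.inv_mul_cancel hc₀ hc, one_mul]
        _ ≤ c⁻¹ * b := by gcongr
    calc a * b ≤ c⁻¹ * b * b := by gcongr
      _ = c⁻¹ * b ^ 2 := by ring
      _ ≤ _ := le_add_self

namespace MeasureTheory

variable {α : Type*} [MeasurableSpace α] {μ : Measure α}

/- Only `f` has to be measurable: the propagator is not assumed to produce measurable functions,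
which rules out Cauchy–Schwarz and leaves this weighted AM–GM. -/
theorem lintegral_mul_le_mul_lintegral_sq_add_inv_mul {f g : α → ℝ≥0∞} (hf : AEMeasurable f μ)
    {c : ℝ≥0∞} (hc₀ : c ≠ 0) (hc : c ≠ ∞) :
    ∫⁻ x, f x * g x ∂μ ≤ c * ∫⁻ x, f x ^ 2 ∂μ + c⁻¹ * ∫⁻ x, g x ^ 2 ∂μ := by
  calc ∫⁻ x, f x * g x ∂μ ≤ ∫⁻ x, (c * f x ^ 2 + c⁻¹ * g x ^ 2) ∂μ :=
        lintegral_mono fun x => ENNReal.mul_le_mul_sq_add_inv_mul_sq _ _ hc₀ hc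
    _ = _ := by
      rw [lintegral_add_left' ((hf.pow_const 2).const_mul c), lintegral_const_mul' _ _ hc,
        lintegral_const_mul' _ _ (ENNReal.inv_ne_top.2 hc₀)]

theorem MemLp.lintegral_enorm_sq {E : Type*} [NormedAddCommGroup E] {u : α → E}
    (hu : MemLp u 2 μ) : ∫⁻ x, ‖u x‖ₑ ^ 2 ∂μ = ENNReal.ofReal (∫ x, ‖u x‖ ^ 2 ∂μ) := by
  have h := ofReal_integral_norm_eq_lintegral_enorm (hu.integrable_norm_pow two_ne_zero)
  simpa using h.symm

theorem lintegral_enorm_sq_eq_eLpNorm_sq {E : Type*} [NormedAddCommGroup E] (u : α → E) :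
    ∫⁻ x, ‖u x‖ₑ ^ 2 ∂μ = eLpNorm u 2 μ ^ 2 := by
  simpa using (eLpNorm_nnreal_pow_eq_lintegral (f := u) (μ := μ) (p := 2) two_ne_zero).symm

theorem norm_integral_conj_mul_le_split {u g : α → ℂ} (hu : MemLp u 2 μ) (hg : eLpNorm g 2 μ ≠ ∞)
    {s : Set α} (hs : MeasurableSet s) (hsc : μ sᶜ ≠ ∞) {a b B : ℝ} (ha : 0 < a) (hb : 0 < b)
    (hB₀ : 0 ≤ B) (hB : ∀ x ∉ s, ‖g x‖ ≤ B) :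
    ‖∫ x, conj (u x) * g x ∂μ‖ ≤ a * ∫ x in s, ‖u x‖ ^ 2 ∂μ + a⁻¹ * (eLpNorm g 2 μ).toReal ^ 2
      + (b * ∫ x, ‖u x‖ ^ 2 ∂μ + b⁻¹ * (B ^ 2 * μ.real sᶜ)) := by
  have hu' : AEMeasurable (fun x => ‖u x‖ₑ) μ := hu.1.enorm
  have h_outer : ∫⁻ x in s, ‖u x‖ₑ * ‖g x‖ₑ ∂μ ≤ ENNReal.ofReal a *
      ENNReal.ofReal (∫ x in s, ‖u x‖ ^ 2 ∂μ) + ENNReal.ofReal a⁻¹ *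
      ENNReal.ofReal ((eLpNorm g 2 μ).toReal ^ 2) := by
    calc ∫⁻ x in s, ‖u x‖ₑ * ‖g x‖ₑ ∂μ
        ≤ ENNReal.ofReal a * ∫⁻ x in s, ‖u x‖ₑ ^ 2 ∂μ
          + (ENNReal.ofReal a)⁻¹ * ∫⁻ x in s, ‖g x‖ₑ ^ 2 ∂μ :=
          lintegral_mul_le_mul_lintegral_sq_add_inv_mul hu'.restrict (by simpa using ha)
            ENNReal.ofReal_ne_top
      _ ≤ _ := by
        rw [(hu.restrict s).lintegral_enorm_sq, ENNReal.ofReal_inv_of_pos ha,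
          ENNReal.ofReal_pow ENNReal.toReal_nonneg, ENNReal.ofReal_toReal hg,
          ← lintegral_enorm_sq_eq_eLpNorm_sq]
        gcongr
        exact Measure.restrict_le_self
  have h_inner : ∫⁻ x in sᶜ, ‖u x‖ₑ * ‖g x‖ₑ ∂μ ≤ ENNReal.ofReal b *
      ENNReal.ofReal (∫ x, ‖u x‖ ^ 2 ∂μ) + ENNReal.ofReal b⁻¹ *
      ENNReal.ofReal (B ^ 2 * μ.real sᶜ) := by
    calc ∫⁻ x in sᶜ, ‖u x‖ₑ * ‖g x‖ₑ ∂μ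
        ≤ ENNReal.ofReal b * ∫⁻ x in sᶜ, ‖u x‖ₑ ^ 2 ∂μ
          + (ENNReal.ofReal b)⁻¹ * ∫⁻ x in sᶜ, ‖g x‖ₑ ^ 2 ∂μ :=
          lintegral_mul_le_mul_lintegral_sq_add_inv_mul hu'.restrict (by simpa using hb)
            ENNReal.ofReal_ne_top
      _ ≤ ENNReal.ofReal b * ∫⁻ x, ‖u x‖ₑ ^ 2 ∂μ
          + (ENNReal.ofReal b)⁻¹ * ∫⁻ x in sᶜ, ENNReal.ofReal B ^ 2 ∂μ := by
        gcongr _ * ?_ + _ * ?_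
        · exact setLIntegral_le_lintegral _ _
        · refine setLIntegral_mono measurable_const fun x hx => ?_
          gcongr
          exact (ofReal_norm (g x)).symm.trans_le (ENNReal.ofReal_le_ofReal (hB x hx))
      _ = _ := by
        rw [hu.lintegral_enorm_sq, ENNReal.ofReal_inv_of_pos hb, setLIntegral_const,
          ENNReal.ofReal_mul (by positivity), ENNReal.ofReal_pow hB₀, measureReal_def,
          ENNReal.ofReal_toReal hsc]
  rw [← ENNReal.ofReal_le_ofReal_iff (by positivity), ofReal_norm]
  calc ‖∫ x, conj (u x) * g x ∂μ‖ₑ ≤ ∫⁻ x, ‖u x‖ₑ * ‖g x‖ₑ ∂μ :=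
        (enorm_integral_le_lintegral_enorm _).trans_eq (by simp)
    _ = ∫⁻ x in s, ‖u x‖ₑ * ‖g x‖ₑ ∂μ + ∫⁻ x in sᶜ, ‖u x‖ₑ * ‖g x‖ₑ ∂μ :=
        (lintegral_add_compl _ hs).symm
    _ ≤ _ := (add_le_add h_outer h_inner).trans_eq <| by
        rw [← ENNReal.ofReal_mul ha.le, ← ENNReal.ofReal_mul (inv_nonneg.2 ha.le),
          ← ENNReal.ofReal_mul hb.le, ← ENNReal.ofReal_mul (inv_nonneg.2 hb.le),
          ← ENNReal.ofReal_add (by positivity) (by positivity),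
          ← ENNReal.ofReal_add (by positivity) (by positivity),
          ← ENNReal.ofReal_add (by positivity) (by positivity)]

end MeasureTheory

theorem tendsto_nhds_zero_of_eventually_norm_le_mul {ι E : Type*} [SeminormedAddCommGroup E]
    {l : Filter ι} {f : ι → E} (K : ℝ) (h : ∀ η > 0, ∀ᶠ i in l, ‖f i‖ ≤ K * η) :
    Tendsto f l (nhds 0) := by
  rw [NormedAddGroup.tendsto_nhds_zero]
  intro δ hδ
  filter_upwards [h (δ / (|K| + 1)) (by positivity)] with i hi
  calc ‖f i‖ ≤ K * (δ / (|K| + 1)) := hi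
    _ ≤ |K| * (δ / (|K| + 1)) := by gcongr; exact le_abs_self K
    _ < (|K| + 1) * (δ / (|K| + 1)) := by gcongr; linarith
    _ = δ := by field_simp

theorem EuclideanSpace.volume_real_closedBall_fin_two_le (x : EuclideanSpace ℝ (Fin 2))
    {r R : ℝ} (hrR : r ≤ R) : volume.real (Metric.closedBall x r) ≤ Real.pi * R ^ 2 := by
  calc volume.real (Metric.closedBall x r) ≤ volume.real (Metric.closedBall x R) :=
        measureReal_mono (Metric.closedBall_subset_closedBall hrR) measure_closedBall_lt_top.ne
    _ = Real.pi * max R 0 ^ 2 := by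
        rw [measureReal_def, EuclideanSpace.volume_closedBall_fin_two, ENNReal.toReal_mul,
          ENNReal.toReal_pow, ENNReal.toReal_ofReal', ENNReal.toReal_ofReal Real.pi_pos.le,
          mul_comm]
    _ ≤ Real.pi * R ^ 2 := by
        refine mul_le_mul_of_nonneg_left ?_ Real.pi_pos.le
        rcases le_total R 0 with h | h
        · simpa [h] using sq_nonneg R
        · simp [h]

theorem EuclideanSpace.norm_integral_conj_mul_le_of_bound_on_closedBall
    {u g : EuclideanSpace ℝ (Fin 2) → ℂ} (hu : MemLp u 2 volume) (hg : eLpNorm g 2 volume ≠ ∞)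
    {η r R B : ℝ} (hη : 0 < η) (hrR : r ≤ R) (hB₀ : 0 ≤ B)
    (hB : ∀ x ∈ Metric.closedBall 0 r, ‖g x‖ ≤ B) :
    ‖∫ x, conj (u x) * g x‖ ≤ η⁻¹ * (∫ x in {x | r < ‖x‖}, ‖u x‖ ^ 2)
      + η * (eLpNorm g 2 volume).toReal ^ 2
      + (η * (∫ x, ‖u x‖ ^ 2) + η⁻¹ * (B ^ 2 * (Real.pi * R ^ 2))) := by
  have hsc : {x : EuclideanSpace ℝ (Fin 2) | r < ‖x‖}ᶜ = Metric.closedBall 0 r := by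
    ext; simp
  have h := norm_integral_conj_mul_le_split hu hg
    (measurableSet_lt measurable_const measurable_norm)
    (by rw [hsc]; exact measure_closedBall_lt_top.ne) (inv_pos.2 hη) hη hB₀
    (fun x hx => hB x (hsc ▸ hx))
  rw [inv_inv, hsc] at h
  refine h.trans ?_
  gcongr
  exact EuclideanSpace.volume_real_closedBall_fin_two_le 0 hrR

theorem stmt9_general (u : ℝ → EuclideanSpace ℝ (Fin 2) → ℂ) (M₀ : ℝ)
    (hmeas : ∀ t, MemLp (u t) 2 volume)
    (hmass : ∀ t, 0 ≤ t → ∫ x, ‖u t x‖ ^ 2 ≤ M₀)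
    (lam : ℝ → ℝ)
    (hlam2 : ∃ C > 0, ∃ T₀ : ℝ, ∀ t, T₀ < t → lam t ≤ C * Real.sqrt t)
    (htight : ∀ ε > 0, ∃ Cε > 0, ∀ t, 0 ≤ t →
      (∫ x in {x : EuclideanSpace ℝ (Fin 2) | Cε * lam t < ‖x‖}, ‖u t x‖ ^ 2) < ε)
    (P : ℝ → (EuclideanSpace ℝ (Fin 2) → ℂ) → (EuclideanSpace ℝ (Fin 2) → ℂ))
    (hPiso : ∀ t f, eLpNorm (P t f) 2 volume = eLpNorm f 2 volume)
    (hPdisp : ∃ Cd > 0, ∀ t : ℝ, 0 < t → ∀ f : EuclideanSpace ℝ (Fin 2) → ℂ,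
      Integrable f volume → ∀ x, ‖P t f x‖ ≤ Cd * t⁻¹ * ∫ y, ‖f y‖)
    (φ : SchwartzMap (EuclideanSpace ℝ (Fin 2)) ℂ) :
    Tendsto (fun t => ∫ x, (starRingEnd ℂ) (u t x) * P t (⇑φ) x) atTop (nhds (0:ℂ)) := by
  obtain ⟨Cd, hCd, hdisp⟩ := hPdisp
  obtain ⟨C, -, T₀, hlam⟩ := hlam2
  set N := (eLpNorm (⇑φ) 2 volume).toReal
  set L := ∫ y, ‖φ y‖
  refine tendsto_nhds_zero_of_eventually_norm_le_mul (2 + N ^ 2 + M₀) fun η hη => ?_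
  obtain ⟨Cε, hCε, htight⟩ := htight (η ^ 2) (by positivity)
  set D := η⁻¹ * (Cd * L * Cε * C) ^ 2 * Real.pi
  have hD : ∀ᶠ t in atTop, D * t⁻¹ < η :=
    (tendsto_inv_atTop_zero.const_mul D).eventually_lt_const (by simpa using hη)
  filter_upwards [eventually_gt_atTop (max T₀ 0), hD] with t ht hDt
  have ht₀ : 0 < t := (le_max_right _ _).trans_lt ht
  have key := EuclideanSpace.norm_integral_conj_mul_le_of_bound_on_closedBall (hmeas t)
    (by rw [hPiso]; exact (φ.memLp 2 volume).eLpNorm_ne_top) hη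
    (mul_le_mul_of_nonneg_left (hlam t ((le_max_left _ _).trans_lt ht)) hCε.le)
    (by positivity : 0 ≤ Cd * t⁻¹ * L) (fun x _ => hdisp t ht₀ φ φ.integrable x)
  have h_disp : η⁻¹ * ((Cd * t⁻¹ * L) ^ 2 * (Real.pi * (Cε * (C * Real.sqrt t)) ^ 2))
      = D * t⁻¹ := by
    rw [mul_pow Cε, mul_pow C, Real.sq_sqrt ht₀.le]
    simp only [D]
    field_simp
  rw [hPiso, h_disp] at key
  calc _ ≤ _ := key
    _ ≤ η⁻¹ * η ^ 2 + η * N ^ 2 + (η * M₀ + D * t⁻¹) := by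
        gcongr η⁻¹ * ?_ + _ + (η * ?_ + _)
        · exact (htight t ht₀.le).le
        · exact hmass t ht₀.le
    _ ≤ (2 + N ^ 2 + M₀) * η := by
        rw [sq η, ← mul_assoc, inv_mul_cancel₀ hη.ne']; nlinarith

/-- If `u` is bounded in `L_t^∞ L_x²`, concentrated at spatial scale `λ(t) ≤ C√t`
(uniform tightness modulo `λ(t)`), then `⟨u(t), e^{itΔ}φ⟩ → 0` as `t → ∞` for every
Schwartz `φ`, where the propagator obeys the `L²` isometry and the dispersive estimate. -/
theorem stmt9 (u : ℝ → EuclideanSpace ℝ (Fin 2) → ℂ) (M₀ : ℝ)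
    (hmeas : ∀ t, MemLp (u t) 2 volume)
    (hmass : ∀ t, 0 ≤ t → ∫ x, ‖u t x‖ ^ 2 ≤ M₀)
    (lam : ℝ → ℝ) (hlam1 : ∀ t, 1 ≤ lam t)
    (hlam2 : ∃ C > 0, ∃ T₀ : ℝ, ∀ t, T₀ < t → lam t ≤ C * Real.sqrt t)
    (htight : ∀ ε > 0, ∃ Cε > 0, ∀ t, 0 ≤ t →
      (∫ x in {x : EuclideanSpace ℝ (Fin 2) | Cε * lam t < ‖x‖}, ‖u t x‖ ^ 2) < ε)
    (P : ℝ → (EuclideanSpace ℝ (Fin 2) → ℂ) → (EuclideanSpace ℝ (Fin 2) → ℂ))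
    (hPiso : ∀ t f, eLpNorm (P t f) 2 volume = eLpNorm f 2 volume)
    (hPdisp : ∃ Cd > 0, ∀ t : ℝ, 0 < t → ∀ f : EuclideanSpace ℝ (Fin 2) → ℂ,
      Integrable f volume → ∀ x, ‖P t f x‖ ≤ Cd * t⁻¹ * ∫ y, ‖f y‖)
    (φ : SchwartzMap (EuclideanSpace ℝ (Fin 2)) ℂ) :
    Tendsto (fun t => ∫ x, (starRingEnd ℂ) (u t x) * P t (⇑φ) x) atTop (nhds (0:ℂ)) :=
  stmt9_general u M₀ hmeas hmass lam hlam2 htight P hPiso hPdisp φ
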